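/- (Stationarity characterization for convolutional fusion.) Fix an output channel p' and suppose the input channels are uncorrelated. Filters h̃^{1,p'},…,h̃^{M,p'} ∈ ℝ^{k̃} minimize E[‖v^{p'} − Σ_{m=1}^{M} h̃^{m,p'} *_{s̃} (a0^{m} − ā0^{m})‖₂²] if and only if U^{m}·h̃^{m,p'} = z^{m,p'} for every m = 1,…,M. -/

import Mathlib

open MeasureTheory Matrix

noncomputable section

/-- 1-based entry `j` of the zero-padded vector `Z(x) ∈ ℝ^{L+k-1}`, which pads
`x ∈ ℝ^L` with `⌊k/2⌋` zeros at the front and `⌊(k-1)/2⌋` zeros at the end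
(entries outside `1,…,L+k-1` are also zero). -/
def padded {L : ℕ} (k : ℕ) (x : Fin L → ℝ) (j : ℤ) : ℝ :=
  if h : 1 ≤ j - ((k / 2 : ℕ) : ℤ) ∧ j - ((k / 2 : ℕ) : ℤ) ≤ (L : ℤ) then
    x ⟨(j - ((k / 2 : ℕ) : ℤ) - 1).toNat, by omega⟩
  else 0

/-- 1-based entry `j` of `u = flip(Z(x))`. -/
def flipped {L : ℕ} (k : ℕ) (x : Fin L → ℝ) (j : ℤ) : ℝ :=
  padded k x ((L : ℤ) + (k : ℤ) - j)

/-- The subvector `u[L−i+1 : L−i+k]` of `u = flip(Z(x))`, as a vector in `ℝ^k`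
(`i` is the 1-based stride position). -/
def window {L : ℕ} (k : ℕ) (x : Fin L → ℝ) (i : ℤ) : Fin k → ℝ :=
  fun a => flipped k x ((L : ℤ) - i + ((a : ℕ) : ℤ) + 1)

/-- Stride-`s` convolution `h *_s x` of a filter `h ∈ ℝ^k` with `x ∈ ℝ^L`: the
`t`-th entry (0-based `t`, stride position `i = 1 + t·s`) equals
`(u[L−i+1 : L−i+k])ᵀ·h` with `u = flip(Z(x))`. The output length `T` should be
taken to be the number of stride positions `i = 1, 1+s, … ≤ L`. -/
def strideConv {L : ℕ} (k s T : ℕ) (h : Fin k → ℝ) (x : Fin L → ℝ) : Fin T → ℝ :=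
  fun t => ∑ a : Fin k, window k x (1 + (t : ℕ) * s) a * h a

/-- Number of stride positions `i = 1, 1+s, 1+2s, … ≤ L`. -/
def numPos (L s : ℕ) : ℕ := (L + s - 1) / s

/-!
Collect the channels into one design matrix `A(ω)`, whose row `t` lists the stride windows of all
channels at position `t`, so that `∑ₘ h̃ᵐ *_s̃ (a0ᵐ - ā0ᵐ) = A(ω) h̃` for the stacked filter `h̃`.
The loss is then the quadratic `E‖v‖² + h̃ᵀ G h̃ - 2 bᵀ h̃` with `G = E[AᵀA]` positive semidefinite
and `b = E[Aᵀ v]`, and such a quadratic is minimal exactly where its gradient vanishes,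
`G h̃ = b`. Uncorrelated channels make `G` block diagonal with blocks `Uᵐ`, while `b` has blocks
`zᵐ`, so `G h̃ = b` splits into `Uᵐ h̃ᵐ = zᵐ`.
-/

theorem Matrix.PosSemidef.forall_quadratic_le_iff_mulVec_eq {ι : Type*} [Fintype ι]
    {G : Matrix ι ι ℝ} (hG : G.PosSemidef) (b h : ι → ℝ) :
    (∀ g, h ⬝ᵥ (G *ᵥ h) - 2 * (b ⬝ᵥ h) ≤ g ⬝ᵥ (G *ᵥ g) - 2 * (b ⬝ᵥ g)) ↔ G *ᵥ h = b := by
  have hsymm : ∀ d, h ⬝ᵥ (G *ᵥ d) = d ⬝ᵥ (G *ᵥ h) := by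
    intro d
    rw [dotProduct_mulVec, ← mulVec_transpose, ← conjTranspose_eq_transpose_of_trivial, hG.1,
      dotProduct_comm]
  have increment : ∀ d, (h + d) ⬝ᵥ (G *ᵥ (h + d)) - 2 * (b ⬝ᵥ (h + d))
      = h ⬝ᵥ (G *ᵥ h) - 2 * (b ⬝ᵥ h) + (2 * (d ⬝ᵥ (G *ᵥ h - b)) + d ⬝ᵥ (G *ᵥ d)) := by
    intro d
    simp only [mulVec_add, add_dotProduct, dotProduct_add, dotProduct_sub, hsymm d,
      dotProduct_comm b d]
    ring
  have hpos : ∀ d, 0 ≤ d ⬝ᵥ (G *ᵥ d) := fun d => by simpa using hG.dotProduct_mulVec_nonneg d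
  constructor
  · intro hmin
    set e := G *ᵥ h - b
    -- The increment along `t • e` is the quadratic `(e ⬝ᵥ G e) t² + 2 (e ⬝ᵥ e) t ≥ 0`;
    -- its discriminant `4 (e ⬝ᵥ e)²` must then be `≤ 0`.
    have hquad : ∀ t : ℝ, 0 ≤ e ⬝ᵥ (G *ᵥ e) * (t * t) + 2 * (e ⬝ᵥ e) * t + 0 := by
      intro t
      have := hmin (h + t • e)
      rw [increment] at this
      simp only [mulVec_smul, smul_dotProduct, dotProduct_smul, smul_eq_mul] at this
      linarith
    have hdisc := discrim_le_zero hquad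
    rw [discrim] at hdisc
    have : e ⬝ᵥ e = 0 := by nlinarith
    exact sub_eq_zero.1 (dotProduct_self_eq_zero.1 this)
  · intro heq g
    have := increment (g - h)
    rw [add_sub_cancel, sub_eq_zero.2 heq, dotProduct_zero] at this
    linarith [hpos (g - h)]

section LeastSquares

variable {Ω T ι : Type*} [MeasurableSpace Ω] {μ : Measure Ω} [Fintype ι]

theorem memLp_two_sub_const [IsFiniteMeasure μ] {f : Ω → ℝ} (hf : Integrable f μ)
    (hf2 : Integrable (fun ω => f ω * f ω) μ) (c : ℝ) : MemLp (fun ω => f ω - c) 2 μ :=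
  ((memLp_two_iff_integrable_sq hf.aestronglyMeasurable).2 (by simpa only [sq] using hf2)).sub
    (memLp_const c)

theorem memLp_mulVec {p : ENNReal} {A : Ω → Matrix T ι ℝ}
    (hA : ∀ t i, MemLp (fun ω => A ω t i) p μ) (g : ι → ℝ) (t : T) :
    MemLp (fun ω => (A ω *ᵥ g) t) p μ :=
  memLp_finsetSum _ fun i _ => (hA t i).mul_const (g i)

theorem integral_dotProduct_const {f : Ω → ι → ℝ} (hf : ∀ i, Integrable (fun ω => f ω i) μ)
    (c : ι → ℝ) : ∫ ω, f ω ⬝ᵥ c ∂μ = (fun i => ∫ ω, f ω i ∂μ) ⬝ᵥ c := by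
  simp only [dotProduct]
  rw [integral_finsetSum _ fun i _ => (hf i).mul_const (c i)]
  simp only [integral_mul_const]

variable [Fintype T]

theorem integrable_dotProduct {f g : Ω → T → ℝ} (hf : ∀ t, MemLp (fun ω => f ω t) 2 μ)
    (hg : ∀ t, MemLp (fun ω => g ω t) 2 μ) : Integrable (fun ω => f ω ⬝ᵥ g ω) μ :=
  integrable_finsetSum _ fun t _ => (hf t).integrable_mul (hg t)

def crossMoment (μ : Measure Ω) (A : Ω → Matrix T ι ℝ) (y : Ω → T → ℝ) : ι → ℝ :=
  fun i => ∫ ω, (y ω ᵥ* A ω) i ∂μ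

def secondMoment (μ : Measure Ω) (A : Ω → Matrix T ι ℝ) : Matrix ι ι ℝ :=
  fun i j => ∫ ω, ((A ω)ᵀ * A ω) i j ∂μ

variable {A : Ω → Matrix T ι ℝ}

theorem integral_dotProduct_mulVec (hA : ∀ t i, MemLp (fun ω => A ω t i) 2 μ)
    {y : Ω → T → ℝ} (hy : ∀ t, MemLp (fun ω => y ω t) 2 μ) (g : ι → ℝ) :
    ∫ ω, y ω ⬝ᵥ (A ω *ᵥ g) ∂μ = crossMoment μ A y ⬝ᵥ g := by
  simp only [dotProduct_mulVec]
  exact integral_dotProduct_const (fun i => integrable_dotProduct hy fun t => hA t i) g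

theorem crossMoment_mulVec (hA : ∀ t i, MemLp (fun ω => A ω t i) 2 μ) (g : ι → ℝ) :
    crossMoment μ A (fun ω => A ω *ᵥ g) = secondMoment μ A *ᵥ g := by
  ext i
  simp only [crossMoment, ← mulVec_transpose, mulVec_mulVec]
  exact integral_dotProduct_const
    (fun j => integrable_dotProduct (fun t => hA t i) fun t => hA t j) g

theorem integral_mulVec_dotProduct_mulVec (hA : ∀ t i, MemLp (fun ω => A ω t i) 2 μ)
    (g g' : ι → ℝ) :
    ∫ ω, (A ω *ᵥ g) ⬝ᵥ (A ω *ᵥ g') ∂μ = g ⬝ᵥ (secondMoment μ A *ᵥ g') := by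
  simp only [dotProduct_comm (A _ *ᵥ g)]
  rw [integral_dotProduct_mulVec hA (memLp_mulVec hA g'), crossMoment_mulVec hA, dotProduct_comm]

theorem secondMoment_posSemidef (hA : ∀ t i, MemLp (fun ω => A ω t i) 2 μ) :
    (secondMoment μ A).PosSemidef := by
  refine .of_dotProduct_mulVec_nonneg (.ext fun i j => ?_) fun g => ?_
  · simp only [star_trivial, secondMoment, mul_apply, transpose_apply, mul_comm]
  · rw [star_trivial, ← integral_mulVec_dotProduct_mulVec hA]
    exact integral_nonneg fun ω => by simpa using dotProduct_star_self_nonneg (A ω *ᵥ g)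

theorem integral_sum_sq_sub_mulVec (hA : ∀ t i, MemLp (fun ω => A ω t i) 2 μ)
    {y : Ω → T → ℝ} (hy : ∀ t, MemLp (fun ω => y ω t) 2 μ) (g : ι → ℝ) :
    ∫ ω, ∑ t, (y ω - A ω *ᵥ g) t ^ 2 ∂μ = ∫ ω, y ω ⬝ᵥ y ω ∂μ
      + (g ⬝ᵥ (secondMoment μ A *ᵥ g) - 2 * (crossMoment μ A y ⬝ᵥ g)) := by
  have hAg := memLp_mulVec hA g
  have expand : ∀ ω, ∑ t, (y ω - A ω *ᵥ g) t ^ 2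
      = y ω ⬝ᵥ y ω - 2 * (y ω ⬝ᵥ A ω *ᵥ g) + (A ω *ᵥ g) ⬝ᵥ (A ω *ᵥ g) := by
    intro ω
    simp only [sq, ← dotProduct.eq_1 (y ω - _), sub_dotProduct, dotProduct_sub,
      dotProduct_comm (A ω *ᵥ g) (y ω)]
    ring
  have hyy := integrable_dotProduct hy hy
  have hyAg := (integrable_dotProduct hy hAg).const_mul 2
  have hdiff : Integrable (fun ω => y ω ⬝ᵥ y ω - 2 * (y ω ⬝ᵥ A ω *ᵥ g)) μ := hyy.sub hyAg
  simp only [expand]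
  rw [integral_add hdiff (integrable_dotProduct hAg hAg), integral_sub hyy hyAg,
    integral_const_mul, integral_dotProduct_mulVec hA hy, integral_mulVec_dotProduct_mulVec hA]
  ring

end LeastSquares

section Convolution

theorem padded_eq_zero_or_exists {L : ℕ} (k : ℕ) (j : ℤ) :
    (∀ x : Fin L → ℝ, padded k x j = 0) ∨ ∃ i, ∀ x : Fin L → ℝ, padded k x j = x i := by
  unfold padded
  by_cases h : 1 ≤ j - ((k / 2 : ℕ) : ℤ) ∧ j - ((k / 2 : ℕ) : ℤ) ≤ (L : ℤ)
  · exact .inr ⟨_, fun x => dif_pos h⟩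
  · exact .inl fun x => dif_neg h

theorem window_apply_eq_zero_or_exists {L : ℕ} (k : ℕ) (i : ℤ) (a : Fin k) :
    (∀ x : Fin L → ℝ, window k x i a = 0) ∨ ∃ j, ∀ x : Fin L → ℝ, window k x i a = x j :=
  padded_eq_zero_or_exists k _

def strideWindows {L : ℕ} (k s T : ℕ) (x : Fin L → ℝ) : Matrix (Fin T) (Fin k) ℝ :=
  of fun t => window k x (1 + (t : ℕ) * s)

def strideConvMatrix {M L : ℕ} (k s T : ℕ) (x : Fin M → Fin L → ℝ) :
    Matrix (Fin T) (Fin M × Fin k) ℝ :=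
  of fun t i => strideWindows k s T (x i.1) t i.2

theorem strideConv_eq_mulVec {L : ℕ} (k s T : ℕ) (h : Fin k → ℝ) (x : Fin L → ℝ) :
    strideConv k s T h x = strideWindows k s T x *ᵥ h :=
  rfl

theorem strideConvMatrix_mulVec_uncurry {M L : ℕ} (k s T : ℕ) (x : Fin M → Fin L → ℝ)
    (g : Fin M → Fin k → ℝ) :
    strideConvMatrix k s T x *ᵥ Function.uncurry g = ∑ m, strideConv k s T (g m) (x m) := by
  ext t
  simp only [mulVec, dotProduct, Fintype.sum_prod_type, Finset.sum_apply, strideConv_eq_mulVec]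
  rfl

variable {Ω : Type*} [MeasurableSpace Ω] {μ : Measure Ω}

theorem memLp_window {p : ENNReal} {L : ℕ} {x : Ω → Fin L → ℝ}
    (hx : ∀ j, MemLp (fun ω => x ω j) p μ) (k : ℕ) (i : ℤ) (a : Fin k) :
    MemLp (fun ω => window k (x ω) i a) p μ := by
  rcases window_apply_eq_zero_or_exists (L := L) k i a with h | ⟨j, h⟩
  · simpa only [h] using MemLp.zero'
  · simpa only [h] using hx j

theorem memLp_strideConv {p : ENNReal} {L : ℕ} {x : Ω → Fin L → ℝ}
    (hx : ∀ j, MemLp (fun ω => x ω j) p μ) (k s T : ℕ) (h : Fin k → ℝ) (t : Fin T) :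
    MemLp (fun ω => strideConv k s T h (x ω) t) p μ :=
  memLp_finsetSum _ fun a _ => (memLp_window hx k _ a).mul_const (h a)

theorem integral_window_mul_window_eq_zero {L L' : ℕ} {x : Ω → Fin L → ℝ} {x' : Ω → Fin L' → ℝ}
    (hxx' : ∀ j j', ∫ ω, x ω j * x' ω j' ∂μ = 0) (k k' : ℕ) (i i' : ℤ) (a : Fin k) (a' : Fin k') :
    ∫ ω, window k (x ω) i a * window k' (x' ω) i' a' ∂μ = 0 := by
  rcases window_apply_eq_zero_or_exists (L := L) k i a with h | ⟨j, h⟩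
  · simp only [h, zero_mul, integral_zero]
  rcases window_apply_eq_zero_or_exists (L := L') k' i' a' with h' | ⟨j', h'⟩
  · simp only [h', mul_zero, integral_zero]
  simpa only [h, h'] using hxx' j j'

theorem secondMoment_strideConvMatrix_mulVec_uncurry {M L : ℕ} (k s T : ℕ)
    {x : Fin M → Ω → Fin L → ℝ} (hx : ∀ m j, MemLp (fun ω => x m ω j) 2 μ)
    (huncorr : ∀ m m', m ≠ m' → ∀ j j', ∫ ω, x m ω j * x m' ω j' ∂μ = 0)
    (g : Fin M → Fin k → ℝ) :
    secondMoment μ (fun ω => strideConvMatrix k s T (x · ω)) *ᵥ Function.uncurry g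
      = Function.uncurry fun m => secondMoment μ (fun ω => strideWindows k s T (x m ω)) *ᵥ g m := by
  have hoff : ∀ m m', m ≠ m' → ∀ a b,
      secondMoment μ (fun ω => strideConvMatrix k s T (x · ω)) (m, a) (m', b) = 0 := by
    intro m m' hne a b
    simp only [secondMoment, mul_apply, transpose_apply, strideConvMatrix, strideWindows, of_apply]
    rw [integral_finsetSum]
    · exact Finset.sum_eq_zero fun t _ =>
        integral_window_mul_window_eq_zero (huncorr m m' hne) k k _ _ a b
    · exact fun t _ => (memLp_window (hx m) k _ a).integrable_mul (memLp_window (hx m') k _ b)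
  ext ⟨m, a⟩
  simp only [mulVec, dotProduct, Fintype.sum_prod_type, Function.uncurry_apply_pair]
  rw [Finset.sum_eq_single m (fun m' _ hne => Finset.sum_eq_zero fun b _ => by
    rw [hoff m m' hne.symm, zero_mul]) (by simp)]
  rfl

end Convolution

theorem fuseinit_conv_stationarity_general
    {Ω : Type*} [MeasurableSpace Ω] (μ : Measure Ω) [IsProbabilityMeasure μ]
    {M N L0 L1 L2 k2 ktil : ℕ} (s2 stil : ℕ)
    (a0 : Fin M → Ω → Fin L0 → ℝ) (a1 : Fin N → Ω → Fin L1 → ℝ)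
    (hInt0 : ∀ m i, Integrable (fun ω => a0 m ω i) μ)
    (hInt1 : ∀ n i, Integrable (fun ω => a1 n ω i) μ)
    (hInt00 : ∀ m m' i j, Integrable (fun ω => a0 m ω i * a0 m' ω j) μ)
    (hInt11 : ∀ n n' i j, Integrable (fun ω => a1 n ω i * a1 n' ω j) μ)
    (abar0 : Fin M → Fin L0 → ℝ)
    (abar1 : Fin N → Fin L1 → ℝ)
    (h2 : Fin N → Fin k2 → ℝ)
    (huncorr : ∀ m m', m ≠ m' → ∀ i j,
      ∫ ω, (a0 m ω i - abar0 m i) * (a0 m' ω j - abar0 m' j) ∂μ = 0)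
    (v : Ω → Fin L2 → ℝ)
    (hv : ∀ ω, v ω = ∑ n, strideConv k2 s2 L2 (h2 n) (fun j => a1 n ω j - abar1 n j))
    (U : Fin M → Matrix (Fin ktil) (Fin ktil) ℝ)
    (hU : ∀ m a b, U m a b = ∫ ω, ∑ t : Fin L2,
      window ktil (fun j => a0 m ω j - abar0 m j) (1 + (t : ℕ) * stil) a
        * window ktil (fun j => a0 m ω j - abar0 m j) (1 + (t : ℕ) * stil) b ∂μ)
    (z : Fin M → Fin ktil → ℝ)
    (hz : ∀ m a, z m a = ∫ ω, ∑ t : Fin L2,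
      v ω t * window ktil (fun j => a0 m ω j - abar0 m j) (1 + (t : ℕ) * stil) a ∂μ)
    (F : (Fin M → Fin ktil → ℝ) → ℝ)
    (hF : ∀ g, F g = ∫ ω, ∑ t : Fin L2,
      ((v ω - ∑ m, strideConv ktil stil L2 (g m) (fun j => a0 m ω j - abar0 m j)) t) ^ 2 ∂μ) :
    ∀ htil : Fin M → Fin ktil → ℝ,
      (∀ g : Fin M → Fin ktil → ℝ, F htil ≤ F g)
        ↔ ∀ m, (U m).mulVec (htil m) = z m := by
  intro htil
  let x : Fin M → Ω → Fin L0 → ℝ := fun m ω j => a0 m ω j - abar0 m j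
  let A : Ω → Matrix (Fin L2) (Fin M × Fin ktil) ℝ := fun ω => strideConvMatrix ktil stil L2 (x · ω)
  have hx : ∀ m j, MemLp (fun ω => x m ω j) 2 μ := fun m j =>
    memLp_two_sub_const (hInt0 m j) (hInt00 m m j j) _
  have hA : ∀ t i, MemLp (fun ω => A ω t i) 2 μ := fun t i => memLp_window (hx i.1) _ _ i.2
  have hv2 : ∀ t, MemLp (fun ω => v ω t) 2 μ := by
    intro t
    simp only [hv, Finset.sum_apply]
    exact memLp_finsetSum _ fun n _ => memLp_strideConv
      (fun j => memLp_two_sub_const (hInt1 n j) (hInt11 n n j j) _) _ _ _ _ t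
  set G := secondMoment μ A
  set b := crossMoment μ A v
  have hFA : ∀ g, F g = ∫ ω, v ω ⬝ᵥ v ω ∂μ
      + (Function.uncurry g ⬝ᵥ (G *ᵥ Function.uncurry g) - 2 * (b ⬝ᵥ Function.uncurry g)) := by
    intro g
    rw [hF, ← integral_sum_sq_sub_mulVec hA hv2]
    simp only [A, x, strideConvMatrix_mulVec_uncurry]
  have hb : b = Function.uncurry z := by
    ext ⟨m, a⟩
    exact (hz m a).symm
  have hG : G *ᵥ Function.uncurry htil = Function.uncurry fun m => U m *ᵥ htil m := by
    rw [secondMoment_strideConvMatrix_mulVec_uncurry _ _ _ hx huncorr]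
    congr! with m
    ext a b
    exact (hU m a b).symm
  calc (∀ g, F htil ≤ F g)
      ↔ ∀ g : Fin M × Fin ktil → ℝ, Function.uncurry htil ⬝ᵥ (G *ᵥ Function.uncurry htil)
          - 2 * (b ⬝ᵥ Function.uncurry htil) ≤ g ⬝ᵥ (G *ᵥ g) - 2 * (b ⬝ᵥ g) := by
        simp only [hFA, add_le_add_iff_left]
        exact ⟨fun hmin g => Function.uncurry_curry g ▸ hmin (Function.curry g), fun hmin g => hmin _⟩
    _ ↔ G *ᵥ Function.uncurry htil = b :=
        (secondMoment_posSemidef hA).forall_quadratic_le_iff_mulVec_eq b _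
    _ ↔ ∀ m, U m *ᵥ htil m = z m := by
        rw [hG, hb, Function.uncurry_injective.eq_iff, funext_iff]

/-- **Stationarity characterization for convolutional fusion.** If the input channels
are uncorrelated, then the filters `h̃^{1,p'},…,h̃^{M,p'}` minimize
`E[‖v^{p'} − Σₘ h̃^{m,p'} *_{s̃} (a0ᵐ − ā0ᵐ)‖₂²]` if and only if
`Uᵐ·h̃^{m,p'} = z^{m,p'}` for every `m`. -/
theorem fuseinit_conv_stationarity
    {Ω : Type*} [MeasurableSpace Ω] (μ : Measure Ω) [IsProbabilityMeasure μ]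
    {M N L0 L1 L2 k2 ktil : ℕ} (s2 stil : ℕ) (hs2 : 0 < s2) (hstil : 0 < stil)
    (hL2 : L2 = numPos L1 s2) (hL2' : L2 = numPos L0 stil)
    (a0 : Fin M → Ω → Fin L0 → ℝ) (a1 : Fin N → Ω → Fin L1 → ℝ)
    (hInt0 : ∀ m i, Integrable (fun ω => a0 m ω i) μ)
    (hInt1 : ∀ n i, Integrable (fun ω => a1 n ω i) μ)
    (hInt00 : ∀ m m' i j, Integrable (fun ω => a0 m ω i * a0 m' ω j) μ)
    (hInt11 : ∀ n n' i j, Integrable (fun ω => a1 n ω i * a1 n' ω j) μ)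
    (hInt10 : ∀ n m i j, Integrable (fun ω => a1 n ω i * a0 m ω j) μ)
    (abar0 : Fin M → Fin L0 → ℝ) (habar0 : ∀ m i, abar0 m i = ∫ ω, a0 m ω i ∂μ)
    (abar1 : Fin N → Fin L1 → ℝ) (habar1 : ∀ n i, abar1 n i = ∫ ω, a1 n ω i ∂μ)
    (h2 : Fin N → Fin k2 → ℝ)
    (huncorr : ∀ m m', m ≠ m' → ∀ i j,
      ∫ ω, (a0 m ω i - abar0 m i) * (a0 m' ω j - abar0 m' j) ∂μ = 0)
    (v : Ω → Fin L2 → ℝ)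
    (hv : ∀ ω, v ω = ∑ n, strideConv k2 s2 L2 (h2 n) (fun j => a1 n ω j - abar1 n j))
    (U : Fin M → Matrix (Fin ktil) (Fin ktil) ℝ)
    (hU : ∀ m a b, U m a b = ∫ ω, ∑ t : Fin L2,
      window ktil (fun j => a0 m ω j - abar0 m j) (1 + (t : ℕ) * stil) a
        * window ktil (fun j => a0 m ω j - abar0 m j) (1 + (t : ℕ) * stil) b ∂μ)
    (z : Fin M → Fin ktil → ℝ)
    (hz : ∀ m a, z m a = ∫ ω, ∑ t : Fin L2,
      v ω t * window ktil (fun j => a0 m ω j - abar0 m j) (1 + (t : ℕ) * stil) a ∂μ)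
    (F : (Fin M → Fin ktil → ℝ) → ℝ)
    (hF : ∀ g, F g = ∫ ω, ∑ t : Fin L2,
      ((v ω - ∑ m, strideConv ktil stil L2 (g m) (fun j => a0 m ω j - abar0 m j)) t) ^ 2 ∂μ) :
    ∀ htil : Fin M → Fin ktil → ℝ,
      (∀ g : Fin M → Fin ktil → ℝ, F htil ≤ F g)
        ↔ ∀ m, (U m).mulVec (htil m) = z m :=
  fuseinit_conv_stationarity_general μ s2 stil a0 a1 hInt0 hInt1 hInt00 hInt11 abar0 abar1 h2
    huncorr v hv U hU z hz F hF

end
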